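/- Let a ∈ ℝ and ρ > 0. Define h : ℝ → ℝ by h(λ) = λ·max{a, −λ/ρ} + (ρ/2)·max{a, −λ/ρ}². Then h is differentiable at every λ ∈ ℝ with derivative h′(λ) = max{a, −λ/ρ}; in particular, since λ ↦ max{a, −λ/ρ} is continuous, h is continuously differentiable on ℝ. -/

import Mathlib

/-!
Since `max a (-l/ρ) + l/ρ = max (a + l/ρ) 0`, completing the square gives
`h l = ρ/2 · max (a + l/ρ) 0 ^ 2 - l²/(2ρ)`, and `y ↦ max y 0 ^ 2` is differentiable with
derivative `2 · max y 0`: it is `0` to the left of the origin and `y²` to the right, and both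
pieces have derivative `0` at the origin.
-/

open Set

theorem hasDerivAt_max_zero_sq (x : ℝ) :
    HasDerivAt (fun y : ℝ => max y 0 ^ 2) (2 * max x 0) x := by
  rcases lt_trichotomy x 0 with hx | rfl | hx
  · have hzero : (fun y : ℝ => max y 0 ^ 2) =ᶠ[nhds x] fun _ => 0 := by
      filter_upwards [Iio_mem_nhds hx] with y hy
      simp [max_eq_right (mem_Iio.mp hy).le]
    simpa [max_eq_right hx.le] using (hasDerivAt_const x (0 : ℝ)).congr_of_eventuallyEq hzero
  · have hleft : HasDerivWithinAt (fun y : ℝ => max y 0 ^ 2) 0 (Iic 0) 0 :=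
      (hasDerivWithinAt_const 0 (Iic 0) (0 : ℝ)).congr_of_mem
        (fun y hy => by simp [max_eq_right (mem_Iic.mp hy)]) self_mem_Iic
    have hright : HasDerivWithinAt (fun y : ℝ => max y 0 ^ 2) 0 (Ici 0) 0 := by
      simpa using ((hasDerivAt_pow 2 (0 : ℝ)).hasDerivWithinAt (s := Ici 0)).congr_of_mem
        (fun y hy => by simp [max_eq_left (mem_Ici.mp hy)]) self_mem_Ici
    simpa [Iic_union_Ici, hasDerivWithinAt_univ] using hleft.union hright
  · have hsq : (fun y : ℝ => max y 0 ^ 2) =ᶠ[nhds x] fun y => y ^ 2 := by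
      filter_upwards [Ioi_mem_nhds hx] with y hy
      simp [max_eq_left (mem_Ioi.mp hy).le]
    simpa [max_eq_left hx.le] using (hasDerivAt_pow 2 x).congr_of_eventuallyEq hsq

theorem hasDerivAt_mul_max_add_mul_max_sq {a ρ : ℝ} (hρ : ρ ≠ 0) (l : ℝ) :
    HasDerivAt (fun l : ℝ => l * max a (-l / ρ) + ρ / 2 * max a (-l / ρ) ^ 2)
      (max a (-l / ρ)) l := by
  have hshift (l : ℝ) : max (a + l / ρ) 0 = max a (-l / ρ) + l / ρ := by
    rw [← max_add_add_right, neg_div, neg_add_cancel]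
  have hsquare : (fun l : ℝ => l * max a (-l / ρ) + ρ / 2 * max a (-l / ρ) ^ 2) =
      fun l => ρ / 2 * max (a + l / ρ) 0 ^ 2 - l ^ 2 / (2 * ρ) := by
    funext l
    rw [hshift]
    field_simp
    ring
  have hinner : HasDerivAt (fun l : ℝ => a + l / ρ) (1 / ρ) l :=
    ((hasDerivAt_id l).div_const ρ).const_add a
  have hderiv := (((hasDerivAt_max_zero_sq (a + l / ρ)).comp l hinner).const_mul (ρ / 2)).sub
    ((hasDerivAt_pow 2 l).div_const (2 * ρ))
  rw [hsquare]
  refine hderiv.congr_deriv ?_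
  rw [hshift]
  field_simp
  ring

theorem contDiff_one_of_hasDerivAt {𝕜 F : Type*} [NontriviallyNormedField 𝕜]
    [NormedAddCommGroup F] [NormedSpace 𝕜 F] {f f' : 𝕜 → F}
    (hf : ∀ x, HasDerivAt f (f' x) x) (hf' : Continuous f') : ContDiff 𝕜 1 f := by
  rw [contDiff_one_iff_deriv]
  refine ⟨fun x => (hf x).differentiableAt, ?_⟩
  rwa [show deriv f = f' from funext fun x => (hf x).deriv]

/-- Scalar core of the dual-gradient computation: for `a ∈ ℝ`, `ρ > 0`, the function
`h(λ) = λ·max{a, −λ/ρ} + (ρ/2)·max{a, −λ/ρ}²` is differentiable everywhere with derivative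
`max{a, −λ/ρ}`, and in particular continuously differentiable on `ℝ`. -/
theorem stmt_0 (a ρ : ℝ) (hρ : 0 < ρ) (h : ℝ → ℝ)
    (hdef : ∀ l : ℝ, h l = l * max a (-l / ρ) + (ρ / 2) * (max a (-l / ρ)) ^ 2) :
    (∀ l : ℝ, HasDerivAt h (max a (-l / ρ)) l) ∧
      (Continuous fun l : ℝ => max a (-l / ρ)) ∧ ContDiff ℝ 1 h := by
  obtain rfl : h = fun l => l * max a (-l / ρ) + ρ / 2 * max a (-l / ρ) ^ 2 := funext hdef
  have hderiv := hasDerivAt_mul_max_add_mul_max_sq (a := a) hρ.ne'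
  have hcont : Continuous fun l : ℝ => max a (-l / ρ) :=
    continuous_const.max (continuous_neg.div_const ρ)
  exact ⟨hderiv, hcont, contDiff_one_of_hasDerivAt hderiv hcont⟩
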